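/- arXiv:2108.12073 — 5 statements merged into one kernel-verified Lean document; each statement's English description precedes it below -/
import Mathlib

section
/- The discrete pressure gradient on a uniform n × n grid (n ≥ 2) is exactly rank-2 deficient: a pressure field p : {0,…,n−1}² → ℝ satisfies Gₓp(i,j) = 0 and G_yp(i,j) = 0 at every interior vertex (i,j) ∈ {1,…,n−1}² if and only if there exist real numbers a, b such that p(i,j) = a whenever i + j is even and p(i,j) = b whenever i + j is odd; in particular the kernel of the discrete gradient operator is two-dimensional. -/
/-!
Adding and subtracting the two stencil equations at an interior vertex turns them into
`p(i,j) = p(i-1,j-1)` and `p(i,j-1) = p(i-1,j)`: the field is constant along both diagonals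
through every interior vertex. Diagonal steps preserve the parity of `i + j`, and they connect
every cell first to row `0` and then, two columns at a time, to `(0,0)` or `(0,1)`.
-/

theorem gradient_stencil_eq_zero_iff {K : Type*} [Field K] [CharZero K] {h : K} (hh : h ≠ 0)
    (a b c d : K) :
    ((c + d) - (a + b)) / (2 * h) = 0 ∧ ((b + d) - (a + c)) / (2 * h) = 0 ↔ d = a ∧ c = b := by
  have h2h : (2 * h : K) ≠ 0 := mul_ne_zero two_ne_zero hh
  simp only [div_eq_zero_iff, h2h, or_false]
  constructor
  · rintro ⟨hx, hy⟩
    exact ⟨by linear_combination (hx + hy) / 2, by linear_combination (hx - hy) / 2⟩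
  · rintro ⟨rfl, rfl⟩
    constructor <;> ring

section Grid

variable {α : Type*} {N : ℤ} {p : ℤ → ℤ → α} {a b : α}

def DiagonalInvariantOn (N : ℤ) (p : ℤ → ℤ → α) : Prop :=
  ∀ i j, 1 ≤ i → i ≤ N → 1 ≤ j → j ≤ N → p i j = p (i - 1) (j - 1) ∧ p i (j - 1) = p (i - 1) j

def IsCheckerboardOn (N : ℤ) (p : ℤ → ℤ → α) (a b : α) : Prop :=
  ∀ i j, 0 ≤ i → i ≤ N → 0 ≤ j → j ≤ N → (Even (i + j) → p i j = a) ∧ (¬Even (i + j) → p i j = b)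

namespace DiagonalInvariantOn

theorem eq_row_zero_emod_two (hp : DiagonalInvariantOn N p) {j : ℤ} (hj : 0 ≤ j) (hjN : j ≤ N) :
    p 0 j = p 0 (j % 2) := by
  lift j to ℕ using hj
  induction j using Nat.twoStepInduction with
  | zero => rfl
  | one => rfl
  | more k ih _ =>
    push_cast at hjN ⊢
    have hanti := (hp 1 (k + 2) le_rfl (by omega) (by omega) hjN).2
    have hdiag := (hp 1 (k + 1) le_rfl (by omega) (by omega) (by omega)).1
    simp only [sub_self, add_sub_cancel_right, show (k : ℤ) + 2 - 1 = k + 1 by ring] at hanti hdiag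
    rw [← hanti, hdiag, ih (by omega)]
    congr 1
    omega

theorem eq_emod_two (hp : DiagonalInvariantOn N p) {i j : ℤ} (hi : 0 ≤ i) (hiN : i ≤ N)
    (hj : 0 ≤ j) (hjN : j ≤ N) : p i j = p 0 ((i + j) % 2) := by
  induction i, hi using Int.leInduction generalizing j with
  | base => simpa using hp.eq_row_zero_emod_two hj hjN
  | succ i hi ih =>
    rcases hj.eq_or_lt with rfl | hj1
    · have hanti := (hp (i + 1) 1 (by omega) hiN le_rfl (by omega)).2
      simp only [sub_self, add_sub_cancel_right] at hanti
      rw [hanti, ih (by omega) zero_le_one (by omega)]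
      congr 1
      omega
    · have hdiag := (hp (i + 1) j (by omega) hiN hj1 hjN).1
      rw [add_sub_cancel_right] at hdiag
      rw [hdiag, ih (by omega) (by omega) (by omega)]
      congr 1
      omega

theorem isCheckerboardOn (hp : DiagonalInvariantOn N p) : IsCheckerboardOn N p (p 0 0) (p 0 1) :=
  fun i j hi hiN hj hjN =>
    ⟨fun he => by rw [hp.eq_emod_two hi hiN hj hjN, Int.even_iff.mp he],
     fun he => by rw [hp.eq_emod_two hi hiN hj hjN, Int.not_even_iff.mp he]⟩

end DiagonalInvariantOn

namespace IsCheckerboardOn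

theorem eq_of_even_add_iff (hp : IsCheckerboardOn N p a b) {i j k l : ℤ}
    (hi : 0 ≤ i) (hiN : i ≤ N) (hj : 0 ≤ j) (hjN : j ≤ N)
    (hk : 0 ≤ k) (hkN : k ≤ N) (hl : 0 ≤ l) (hlN : l ≤ N) (hpar : Even (i + j) ↔ Even (k + l)) :
    p i j = p k l := by
  obtain ⟨hija, hijb⟩ := hp i j hi hiN hj hjN
  obtain ⟨hkla, hklb⟩ := hp k l hk hkN hl hlN
  by_cases he : Even (i + j)
  · rw [hija he, hkla (hpar.mp he)]
  · rw [hijb he, hklb (mt hpar.mpr he)]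

theorem diagonalInvariantOn (hp : IsCheckerboardOn N p a b) : DiagonalInvariantOn N p := by
  intro i j hi hiN hj hjN
  constructor
  · refine hp.eq_of_even_add_iff (by omega) hiN (by omega) hjN (by omega) (by omega) (by omega)
      (by omega) ?_
    rw [show i - 1 + (j - 1) = i + j - 2 by ring, Int.even_sub]
    simp
  · exact hp.eq_of_even_add_iff (by omega) hiN (by omega) (by omega) (by omega) (by omega)
      (by omega) hjN (by rw [show i + (j - 1) = i - 1 + j by ring])

end IsCheckerboardOn

theorem diagonalInvariantOn_iff_exists_isCheckerboardOn :
    DiagonalInvariantOn N p ↔ ∃ a b, IsCheckerboardOn N p a b :=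
  ⟨fun hp => ⟨_, _, hp.isCheckerboardOn⟩, fun ⟨_, _, hp⟩ => hp.diagonalInvariantOn⟩

end Grid

theorem kernel_of_discrete_gradient_eq_checkerboard_general
    (n : ℕ) (h : ℝ) (hh : 0 < h)
    (p : ℤ → ℤ → ℝ) :
    (∀ i j : ℤ, 1 ≤ i → i ≤ (n : ℤ) - 1 → 1 ≤ j → j ≤ (n : ℤ) - 1 →
      ((p i (j-1) + p i j) - (p (i-1) (j-1) + p (i-1) j)) / (2 * h) = 0 ∧
      ((p (i-1) j + p i j) - (p (i-1) (j-1) + p i (j-1))) / (2 * h) = 0)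
    ↔
    (∃ a b : ℝ, ∀ i j : ℤ, 0 ≤ i → i ≤ (n : ℤ) - 1 → 0 ≤ j → j ≤ (n : ℤ) - 1 →
      (Even (i + j) → p i j = a) ∧ (¬ Even (i + j) → p i j = b)) := by
  simp only [gradient_stencil_eq_zero_iff hh.ne']
  exact diagonalInvariantOn_iff_exists_isCheckerboardOn

/-- The finite-difference discrete pressure gradient on a uniform `n × n` grid (`n ≥ 2`)
is exactly rank-2 deficient: a pressure field `p` has vanishing discrete gradient at
every interior vertex if and only if it is a checkerboard field, i.e. there exist
`a, b ∈ ℝ` with `p(i,j) = a` whenever `i + j` is even and `p(i,j) = b` whenever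
`i + j` is odd. -/
theorem kernel_of_discrete_gradient_eq_checkerboard
    (n : ℕ) (hn : 2 ≤ n) (h : ℝ) (hh : 0 < h)
    (p : ℤ → ℤ → ℝ) :
    (∀ i j : ℤ, 1 ≤ i → i ≤ (n : ℤ) - 1 → 1 ≤ j → j ≤ (n : ℤ) - 1 →
      ((p i (j-1) + p i j) - (p (i-1) (j-1) + p (i-1) j)) / (2 * h) = 0 ∧
      ((p (i-1) j + p i j) - (p (i-1) (j-1) + p i (j-1))) / (2 * h) = 0)
    ↔
    (∃ a b : ℝ, ∀ i j : ℤ, 0 ≤ i → i ≤ (n : ℤ) - 1 → 0 ≤ j → j ≤ (n : ℤ) - 1 →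
      (Even (i + j) → p i j = a) ∧ (¬ Even (i + j) → p i j = b)) :=
  kernel_of_discrete_gradient_eq_checkerboard_general n h hh p
end

section
/- The finite-volume discrete pressure gradient is the negative adjoint of the finite-volume discrete divergence on a uniform grid: for every pressure field p : {0,…,n−1}² → ℝ and all velocity fields u, v : {0,…,n}² → ℝ that vanish at every boundary vertex (i.e. u(i,j) = v(i,j) = 0 whenever i ∈ {0,n} or j ∈ {0,n}), one has Σ_{(i,j)∈{1,…,n−1}²} [Gₓp(i,j) u(i,j) + G_yp(i,j) v(i,j)] = − Σ_{(i,j)∈{0,…,n−1}²} p(i,j) D(u,v)(i,j). -/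
/-!
Both sides split into an `x`-part (in `u`) and a `y`-part (in `v`). In the `x`-part the
divergence is a forward difference in `i` of the edge sums `u i j + u i (j+1)`, and the
gradient a backward difference in `i` of `p i (j-1) + p i j`. Summation by parts in `i` moves
the difference onto `p`, and the same reindexing in `j` moves the edge sum onto `p`; all
boundary terms vanish with `u`. The `y`-part is the `x`-part of the transposed fields.
-/

open Finset

section SummationByParts

variable {M R : Type*} [AddCommMonoid M] [CommRing R]

theorem sum_Icc_zero_eq_sum_Icc_one (n : ℤ) (f : ℤ → M) (hf : f 0 = 0) :
    ∑ i ∈ Icc 0 (n - 1), f i = ∑ i ∈ Icc 1 (n - 1), f i := by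
  refine (sum_subset (Icc_subset_Icc_left zero_le_one) fun i hi hi' => ?_).symm
  simp only [mem_Icc] at hi hi'
  obtain rfl : i = 0 := by omega
  exact hf

theorem sum_Icc_zero_add_one_eq_sum_Icc_one (n : ℤ) (f : ℤ → M) (hf : f n = 0) :
    ∑ i ∈ Icc 0 (n - 1), f (i + 1) = ∑ i ∈ Icc 1 (n - 1), f i := by
  have hshift : ∑ i ∈ Icc 0 (n - 1), f (i + 1) = ∑ i ∈ Icc 1 n, f i := by
    rw [show Icc 1 n = (Icc 0 (n - 1)).map (addRightEmbedding 1) by simp, sum_map]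
    rfl
  rw [hshift]
  refine (sum_subset (Icc_subset_Icc_right (by omega)) fun i hi hi' => ?_).symm
  simp only [mem_Icc] at hi hi'
  obtain rfl : i = n := by omega
  exact hf

theorem sum_Icc_mul_sub_eq_neg_sum (n : ℤ) (q g : ℤ → R) (h0 : g 0 = 0) (hn : g n = 0) :
    ∑ i ∈ Icc 0 (n - 1), q i * (g (i + 1) - g i)
      = -∑ i ∈ Icc 1 (n - 1), (q i - q (i - 1)) * g i := by
  have hsucc := sum_Icc_zero_add_one_eq_sum_Icc_one n (fun i => q (i - 1) * g i) (by simp [hn])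
  have hself := sum_Icc_zero_eq_sum_Icc_one n (fun i => q i * g i) (by simp [h0])
  simp only [add_sub_cancel_right] at hsucc
  simp only [mul_sub, sub_mul, sum_sub_distrib, hsucc, hself]
  ring

theorem sum_Icc_mul_add_eq_sum (n : ℤ) (q g : ℤ → R) (h0 : g 0 = 0) (hn : g n = 0) :
    ∑ i ∈ Icc 0 (n - 1), q i * (g i + g (i + 1))
      = ∑ i ∈ Icc 1 (n - 1), (q (i - 1) + q i) * g i := by
  have hsucc := sum_Icc_zero_add_one_eq_sum_Icc_one n (fun i => q (i - 1) * g i) (by simp [hn])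
  have hself := sum_Icc_zero_eq_sum_Icc_one n (fun i => q i * g i) (by simp [h0])
  simp only [add_sub_cancel_right] at hsucc
  simp only [mul_add, add_mul, sum_add_distrib, hsucc, hself]
  ring

end SummationByParts

def VanishesOnBoundary {R : Type*} [Zero R] (n : ℤ) (u : ℤ → ℤ → R) : Prop :=
  ∀ i j, (i = 0 ∨ i = n ∨ j = 0 ∨ j = n) → u i j = 0

section Grid

variable {R : Type*} [CommRing R]

theorem sum_cells_mul_divergence_x {n : ℤ} (p u : ℤ → ℤ → R) (hu : VanishesOnBoundary n u) :
    ∑ i ∈ Icc 0 (n - 1), ∑ j ∈ Icc 0 (n - 1),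
        p i j * ((u (i+1) j + u (i+1) (j+1)) - (u i j + u i (j+1)))
      = -∑ i ∈ Icc 1 (n - 1), ∑ j ∈ Icc 1 (n - 1),
        ((p i (j-1) + p i j) - (p (i-1) (j-1) + p (i-1) j)) * u i j := by
  calc _ = ∑ j ∈ Icc 0 (n - 1), -∑ i ∈ Icc 1 (n - 1),
          (p i j - p (i-1) j) * (u i j + u i (j+1)) := by
        rw [sum_comm]
        refine sum_congr rfl fun j _ => ?_
        exact sum_Icc_mul_sub_eq_neg_sum n (p · j) (fun k => u k j + u k (j+1))
          (by simp [hu 0 j, hu 0 (j+1)]) (by simp [hu n j, hu n (j+1)])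
    _ = -∑ i ∈ Icc 1 (n - 1), ∑ j ∈ Icc 1 (n - 1),
          ((p i (j-1) - p (i-1) (j-1)) + (p i j - p (i-1) j)) * u i j := by
        rw [sum_neg_distrib, sum_comm]
        refine congrArg _ (sum_congr rfl fun i _ => ?_)
        exact sum_Icc_mul_add_eq_sum n (fun j => p i j - p (i-1) j) (u i)
          (hu i 0 (by simp)) (hu i n (by simp))
    _ = _ := by
        congr 1
        refine sum_congr rfl fun i _ => sum_congr rfl fun j _ => ?_
        ring

theorem VanishesOnBoundary.transpose {n : ℤ} {u : ℤ → ℤ → R} (hu : VanishesOnBoundary n u) :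
    VanishesOnBoundary n (fun j i => u i j) :=
  fun j i hb => hu i j (by tauto)

theorem sum_cells_mul_divergence_y {n : ℤ} (p v : ℤ → ℤ → R) (hv : VanishesOnBoundary n v) :
    ∑ i ∈ Icc 0 (n - 1), ∑ j ∈ Icc 0 (n - 1),
        p i j * ((v i (j+1) + v (i+1) (j+1)) - (v i j + v (i+1) j))
      = -∑ i ∈ Icc 1 (n - 1), ∑ j ∈ Icc 1 (n - 1),
        ((p (i-1) j + p i j) - (p (i-1) (j-1) + p i (j-1))) * v i j := by
  rw [sum_comm, sum_cells_mul_divergence_x (fun j i => p i j) _ hv.transpose, sum_comm]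

end Grid

theorem fv_gradient_neg_adjoint_of_divergence_general
    (n : ℕ) (h : ℝ)
    (p : ℤ → ℤ → ℝ) (u v : ℤ → ℤ → ℝ)
    (hbc : ∀ i j : ℤ, (i = 0 ∨ i = (n : ℤ) ∨ j = 0 ∨ j = (n : ℤ)) →
      u i j = 0 ∧ v i j = 0) :
    ∑ i ∈ Finset.Icc (1 : ℤ) ((n : ℤ) - 1), ∑ j ∈ Finset.Icc (1 : ℤ) ((n : ℤ) - 1),
      ((h / 2) * ((p i (j-1) + p i j) - (p (i-1) (j-1) + p (i-1) j)) * u i j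
        + (h / 2) * ((p (i-1) j + p i j) - (p (i-1) (j-1) + p i (j-1))) * v i j)
    =
    - ∑ i ∈ Finset.Icc (0 : ℤ) ((n : ℤ) - 1), ∑ j ∈ Finset.Icc (0 : ℤ) ((n : ℤ) - 1),
      p i j *
        ((h / 2) * ((u (i+1) j + u (i+1) (j+1)) - (u i j + u i (j+1)))
          + (h / 2) * ((v i (j+1) + v (i+1) (j+1)) - (v i j + v (i+1) j))) := by
  have hx := sum_cells_mul_divergence_x p u fun i j hb => (hbc i j hb).1
  have hy := sum_cells_mul_divergence_y p v fun i j hb => (hbc i j hb).2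
  simp only [mul_add, mul_left_comm (p _ _) (h / 2), mul_assoc (h / 2), sum_add_distrib,
    ← mul_sum, hx, hy]
  ring

/-- On a uniform grid, the finite-volume discrete pressure gradient is the negative
adjoint of the finite-volume discrete divergence: for every pressure field `p` on cells
and every velocity field `(u,v)` on vertices vanishing on the boundary,
`Σ (Gₓp·u + G_yp·v) over interior vertices = - Σ p·D(u,v) over cells`. -/
theorem fv_gradient_neg_adjoint_of_divergence
    (n : ℕ) (hn : 2 ≤ n) (h : ℝ) (hh : 0 < h)
    (p : ℤ → ℤ → ℝ) (u v : ℤ → ℤ → ℝ)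
    (hbc : ∀ i j : ℤ, (i = 0 ∨ i = (n : ℤ) ∨ j = 0 ∨ j = (n : ℤ)) →
      u i j = 0 ∧ v i j = 0) :
    ∑ i ∈ Finset.Icc (1 : ℤ) ((n : ℤ) - 1), ∑ j ∈ Finset.Icc (1 : ℤ) ((n : ℤ) - 1),
      ((h / 2) * ((p i (j-1) + p i j) - (p (i-1) (j-1) + p (i-1) j)) * u i j
        + (h / 2) * ((p (i-1) j + p i j) - (p (i-1) (j-1) + p i (j-1))) * v i j)
    =
    - ∑ i ∈ Finset.Icc (0 : ℤ) ((n : ℤ) - 1), ∑ j ∈ Finset.Icc (0 : ℤ) ((n : ℤ) - 1),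
      p i j *
        ((h / 2) * ((u (i+1) j + u (i+1) (j+1)) - (u i j + u i (j+1)))
          + (h / 2) * ((v i (j+1) + v (i+1) (j+1)) - (v i j + v (i+1) j))) :=
  fv_gradient_neg_adjoint_of_divergence_general n h p u v hbc
end

section
/- The trapezoidal-rule discretization of the divergence theorem over a closed polygonal curve is exact for affine vector fields: let x₁, …, xₙ ∈ ℝ² with xₙ₊₁ := x₁, let R : ℝ² → ℝ² be the clockwise 90° rotation R(a,b) = (b,−a), and let 𝐮(x) = A x + c be an affine vector field with A a 2×2 real matrix and c ∈ ℝ². Then Σ_{i=1}^{n} ((𝐮(xᵢ) + 𝐮(xᵢ₊₁))/2) · R(xᵢ₊₁ − xᵢ) = tr(A) · (1/2) Σ_{i=1}^{n} det[xᵢ, xᵢ₊₁], where det[x, y] denotes the determinant of the 2×2 matrix with columns x and y (so the last sum is the signed shoelace area enclosed by the polygon), and tr(A) = ∇·𝐮. -/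
open Finset Matrix

/-!
Writing `R` for the rotation, `v ⬝ R w = det[v, w]`, so the flux of the trapezoidal rule through the
edge `[p, q]` is `½ det[u p + u q, q - p]`. For `u y = A y + c` this splits into an exact difference
`F q - F p` of the potential `F y = ½ det[A y, y] + det[c, y]` plus `½ (det[A p, q] + det[p, A q])`,
and the two-dimensional identity `det[A p, q] + det[p, A q] = tr A · det[p, q]` turns the latter into
`tr A · ½ det[p, q]`. Around a closed polygon the differences of `F` telescope to zero.
-/

/-- The determinant `det[p, q]` of the `2 × 2` matrix with columns `p` and `q`. -/
def wedge (p q : Fin 2 → ℝ) : ℝ := p 0 * q 1 - p 1 * q 0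

def rotCW (y : Fin 2 → ℝ) : Fin 2 → ℝ := ![y 1, -(y 0)]

lemma dotProduct_rotCW (v y : Fin 2 → ℝ) : v ⬝ᵥ rotCW y = wedge v y := by
  simp only [dotProduct, Fin.sum_univ_two, rotCW, wedge, cons_val_zero, cons_val_one]
  ring

lemma wedge_mulVec_add_wedge_mulVec (A : Matrix (Fin 2) (Fin 2) ℝ) (p q : Fin 2 → ℝ) :
    wedge (A *ᵥ p) q + wedge p (A *ᵥ q) = A.trace * wedge p q := by
  simp only [wedge, mulVec, dotProduct, Fin.sum_univ_two, trace, Matrix.diag]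
  ring

noncomputable def fluxPotential (A : Matrix (Fin 2) (Fin 2) ℝ) (c y : Fin 2 → ℝ) : ℝ :=
  (1 / 2) * wedge (A *ᵥ y) y + wedge c y

lemma trapezoid_flux_affine (A : Matrix (Fin 2) (Fin 2) ℝ) (c p q : Fin 2 → ℝ) :
    ((1 / 2 : ℝ) • (A *ᵥ p + c + (A *ᵥ q + c))) ⬝ᵥ rotCW (q - p)
      = A.trace * ((1 / 2) * wedge p q) + (fluxPotential A c q - fluxPotential A c p) := by
  have hA := wedge_mulVec_add_wedge_mulVec A p q
  rw [dotProduct_rotCW]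
  simp only [wedge, fluxPotential, Pi.add_apply, Pi.sub_apply, Pi.smul_apply, smul_eq_mul] at hA ⊢
  linear_combination (1 / 2 : ℝ) * hA

/-- The trapezoidal-rule discretization of the divergence theorem over a closed
polygonal curve is exact for affine vector fields: with vertices `x 0, …, x n`
(`x n = x 0`), `R` the clockwise 90° rotation `R(a,b) = (b,-a)`, and `U(y) = A y + c`
affine, `Σᵢ ((U(xᵢ) + U(xᵢ₊₁))/2) ⬝ R(xᵢ₊₁ − xᵢ) = tr A · (1/2) Σᵢ det[xᵢ, xᵢ₊₁]`,
the last sum being the signed shoelace area of the polygon. -/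
theorem trapezoid_divergence_exact_for_affine
    (n : ℕ) (x : ℕ → Fin 2 → ℝ) (hclosed : x n = x 0)
    (A : Matrix (Fin 2) (Fin 2) ℝ) (c : Fin 2 → ℝ)
    (U : (Fin 2 → ℝ) → (Fin 2 → ℝ)) (hU : ∀ y, U y = A.mulVec y + c)
    (R : (Fin 2 → ℝ) → (Fin 2 → ℝ)) (hR : ∀ y, R y = ![y 1, -(y 0)]) :
    ∑ i ∈ Finset.range n,
      (((1 : ℝ) / 2) • (U (x i) + U (x (i + 1)))) ⬝ᵥ R (x (i + 1) - x i)
    =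
    A.trace * ((1 / 2) * ∑ i ∈ Finset.range n,
      (x i 0 * x (i + 1) 1 - x i 1 * x (i + 1) 0)) := by
  obtain rfl : U = fun y => A *ᵥ y + c := funext hU
  obtain rfl : R = rotCW := funext hR
  have telescope : ∑ i ∈ range n, (fluxPotential A c (x (i + 1)) - fluxPotential A c (x i)) = 0 := by
    rw [sum_range_sub (fun i => fluxPotential A c (x i)), hclosed, sub_self]
  simp only [trapezoid_flux_affine]
  rw [sum_add_distrib, telescope, add_zero, ← mul_sum, ← mul_sum]
  rfl
end

section
/- Truncation-error bound for the nonuniform central second difference: let f : ℝ → ℝ be three times differentiable on [x−d_L, x+d_R] with |f'''(ξ)| ≤ M for all ξ in this interval, where d_R, d_L > 0. Then | (2/(d_R+d_L)) · [ (f(x+d_R) − f(x))/d_R − (f(x) − f(x−d_L))/d_L ] − f''(x) | ≤ M (d_R² + d_L²) / (3(d_R + d_L)). -/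
/-!
Expand `f(x + d_R)` and `f(x - d_L)` to second order about `x`: the Lagrange-type bound
`|R| ≤ M d³ / 6` on each remainder follows by integrating `|f'''| ≤ M` three times.
Dividing the remainders by `d_R`, `d_L`, the first-order terms cancel and the second-order
terms sum to `(d_R + d_L) f''(x) / 2`, so the error is `2 / (d_R + d_L)` times a sum of two
terms bounded by `M d_R² / 6` and `M d_L² / 6`.
-/

open Set

lemma abs_le_pow_succ_of_abs_deriv_le_pow {h h' : ℝ → ℝ} {a b C : ℝ} {n : ℕ} (ha : h a = 0)
    (hh : ∀ t ∈ Icc a b, HasDerivAt h (h' t) t)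
    (bound : ∀ t ∈ Ico a b, |h' t| ≤ C * (t - a) ^ n) :
    ∀ t ∈ Icc a b, |h t| ≤ C * (t - a) ^ (n + 1) / (n + 1) := by
  have hB : ∀ t, HasDerivAt (fun t => C * (t - a) ^ (n + 1) / (n + 1)) (C * (t - a) ^ n) t := by
    intro t
    have hd := ((((hasDerivAt_id t).sub_const a).pow (n + 1)).const_mul C).div_const
      ((n : ℝ) + 1)
    refine hd.congr_deriv ?_
    simp only [id]
    field_simp
    push_cast
    ring
  intro t ht
  simpa only [Real.norm_eq_abs] using image_norm_le_of_norm_deriv_right_le_deriv_boundary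
    (fun y hy => (hh y hy).continuousAt.continuousWithinAt)
    (fun y hy => (hh y (Ico_subset_Icc_self hy)).hasDerivWithinAt)
    (by simp [ha]) hB bound ht

lemma abs_taylor_two_remainder_le {g g' g'' g''' : ℝ → ℝ} {a b M : ℝ} (hab : a ≤ b)
    (hg : ∀ t ∈ Icc a b, HasDerivAt g (g' t) t)
    (hg' : ∀ t ∈ Icc a b, HasDerivAt g' (g'' t) t)
    (hg'' : ∀ t ∈ Icc a b, HasDerivAt g'' (g''' t) t)
    (hM : ∀ t ∈ Icc a b, |g''' t| ≤ M) :
    |g b - g a - g' a * (b - a) - g'' a * (b - a) ^ 2 / 2| ≤ M * (b - a) ^ 3 / 6 := by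
  have h2 : ∀ t ∈ Icc a b, |g'' t - g'' a| ≤ M * (t - a) := fun t ht => by
    simpa using abs_le_pow_succ_of_abs_deriv_le_pow (h := fun t => g'' t - g'' a) (n := 0)
      (sub_self _) (fun t ht => (hg'' t ht).sub_const _)
      (fun t ht => by simpa using hM t (Ico_subset_Icc_self ht)) t ht
  have h1 : ∀ t ∈ Icc a b, |g' t - g' a - g'' a * (t - a)| ≤ M * (t - a) ^ 2 / 2 := by
    have hd : ∀ t ∈ Icc a b,
        HasDerivAt (fun t => g' t - g' a - g'' a * (t - a)) (g'' t - g'' a) t := fun t ht =>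
      (((hg' t ht).sub_const _).sub (((hasDerivAt_id t).sub_const a).const_mul _)).congr_deriv
        (by simp)
    intro t ht
    simpa [one_add_one_eq_two] using abs_le_pow_succ_of_abs_deriv_le_pow (n := 1) (by ring) hd
      (fun t ht => by simpa using h2 t (Ico_subset_Icc_self ht)) t ht
  have hd : ∀ t ∈ Icc a b, HasDerivAt
      (fun t => g t - g a - g' a * (t - a) - g'' a * (t - a) ^ 2 / 2)
      (g' t - g' a - g'' a * (t - a)) t := fun t ht => by
    have h := (((hg t ht).sub_const (g a)).sub
      (((hasDerivAt_id t).sub_const a).const_mul (g' a))).sub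
      (((((hasDerivAt_id t).sub_const a).pow 2).const_mul (g'' a)).div_const 2)
    exact h.congr_deriv (by simp only [id]; ring)
  have h0 := abs_le_pow_succ_of_abs_deriv_le_pow (n := 2) (C := M / 2) (by ring) hd
    (fun t ht => by simpa [mul_div_right_comm] using h1 t (Ico_subset_Icc_self ht))
    b (right_mem_Icc.2 hab)
  convert h0 using 1
  norm_num
  ring

lemma abs_taylor_two_remainder_left_le {g g' g'' g''' : ℝ → ℝ} {a b M : ℝ} (hab : a ≤ b)
    (hg : ∀ t ∈ Icc a b, HasDerivAt g (g' t) t)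
    (hg' : ∀ t ∈ Icc a b, HasDerivAt g' (g'' t) t)
    (hg'' : ∀ t ∈ Icc a b, HasDerivAt g'' (g''' t) t)
    (hM : ∀ t ∈ Icc a b, |g''' t| ≤ M) :
    |g a - g b + g' b * (b - a) - g'' b * (b - a) ^ 2 / 2| ≤ M * (b - a) ^ 3 / 6 := by
  have hmem : ∀ t ∈ Icc (-b) (-a), -t ∈ Icc a b := fun t ht =>
    ⟨le_neg_of_le_neg ht.2, neg_le_of_neg_le ht.1⟩
  have hneg : ∀ {φ φ' : ℝ → ℝ}, (∀ t ∈ Icc a b, HasDerivAt φ (φ' t) t) →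
      ∀ t ∈ Icc (-b) (-a), HasDerivAt (fun s => φ (-s)) (-φ' (-t)) t := fun hφ t ht =>
    ((hφ (-t) (hmem t ht)).comp t (hasDerivAt_neg t)).congr_deriv (mul_neg_one _)
  have := abs_taylor_two_remainder_le (g := fun s => g (-s)) (g' := fun s => -g' (-s))
    (g'' := fun s => g'' (-s)) (neg_le_neg hab) (hneg hg)
    (fun t ht => (hneg hg' t ht).neg.congr_deriv (neg_neg _)) (hneg hg'')
    (fun t ht => by simpa using hM (-t) (hmem t ht))
  simp only [neg_neg] at this
  convert this using 2 <;> ring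

lemma nonuniform_second_difference_sub_eq {fL f₀ fR f₁ f₂ dR dL : ℝ} (hdR : dR ≠ 0)
    (hdL : dL ≠ 0) (hd : dR + dL ≠ 0) :
    2 / (dR + dL) * ((fR - f₀) / dR - (f₀ - fL) / dL) - f₂ =
      2 / (dR + dL) * ((fR - f₀ - f₁ * dR - f₂ * dR ^ 2 / 2) / dR
        + (fL - f₀ + f₁ * dL - f₂ * dL ^ 2 / 2) / dL) := by
  field_simp
  ring

lemma abs_two_div_add_mul_add_div_le {ER EL dR dL M : ℝ} (hdR : 0 < dR) (hdL : 0 < dL)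
    (hR : |ER| ≤ M * dR ^ 3 / 6) (hL : |EL| ≤ M * dL ^ 3 / 6) :
    |2 / (dR + dL) * (ER / dR + EL / dL)| ≤ M * (dR ^ 2 + dL ^ 2) / (3 * (dR + dL)) :=
  calc |2 / (dR + dL) * (ER / dR + EL / dL)|
      ≤ 2 / (dR + dL) * (|ER| / dR + |EL| / dL) := by
        rw [abs_mul, abs_of_pos (by positivity)]
        gcongr
        refine (abs_add_le _ _).trans_eq ?_
        rw [abs_div, abs_div, abs_of_pos hdR, abs_of_pos hdL]
    _ ≤ 2 / (dR + dL) * (M * dR ^ 3 / 6 / dR + M * dL ^ 3 / 6 / dL) := by gcongr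
    _ = M * (dR ^ 2 + dL ^ 2) / (3 * (dR + dL)) := by field_simp; ring

/-- Truncation-error bound for the nonuniform central second difference: if `f` is
three times differentiable on `[x - d_L, x + d_R]` with `|f'''| ≤ M` there, then
the nonuniform central second difference approximates `f''(x)` with error at most
`M (d_R² + d_L²) / (3 (d_R + d_L))`. -/
theorem nonuniform_second_difference_truncation_error
    (f f' f'' f''' : ℝ → ℝ) (x dR dL M : ℝ)
    (hdR : 0 < dR) (hdL : 0 < dL)
    (hf : ∀ y ∈ Set.Icc (x - dL) (x + dR), HasDerivAt f (f' y) y)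
    (hf' : ∀ y ∈ Set.Icc (x - dL) (x + dR), HasDerivAt f' (f'' y) y)
    (hf'' : ∀ y ∈ Set.Icc (x - dL) (x + dR), HasDerivAt f'' (f''' y) y)
    (hM : ∀ y ∈ Set.Icc (x - dL) (x + dR), |f''' y| ≤ M) :
    |(2 / (dR + dL)) * ((f (x + dR) - f x) / dR - (f x - f (x - dL)) / dL) - f'' x|
      ≤ M * (dR^2 + dL^2) / (3 * (dR + dL)) := by
  have hsubR : Icc x (x + dR) ⊆ Icc (x - dL) (x + dR) := Icc_subset_Icc_left (by linarith)
  have hsubL : Icc (x - dL) x ⊆ Icc (x - dL) (x + dR) := Icc_subset_Icc_right (by linarith)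
  have hR := abs_taylor_two_remainder_le (le_add_of_nonneg_right hdR.le)
    (hf · <| hsubR ·) (hf' · <| hsubR ·) (hf'' · <| hsubR ·) (hM · <| hsubR ·)
  have hL := abs_taylor_two_remainder_left_le (sub_le_self x hdL.le)
    (hf · <| hsubL ·) (hf' · <| hsubL ·) (hf'' · <| hsubL ·) (hM · <| hsubL ·)
  simp only [add_sub_cancel_left, sub_sub_cancel] at hR hL
  rw [nonuniform_second_difference_sub_eq (f₁ := f' x) hdR.ne' hdL.ne' (by positivity)]
  exact abs_two_div_add_mul_add_div_le hdR hdL hR hL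
end

section
/- Third-order local truncation error of the midpoint (RK2) backward characteristic tracing: let g : ℝ² × ℝ → ℝ² be twice continuously differentiable with g and all its partial derivatives up to order 2 bounded on ℝ² × ℝ. Fix x ∈ ℝ², t ∈ ℝ, and for Δt ∈ (0,1] let X : ℝ → ℝ² denote the solution of the ODE X'(s) = g(X(s), s) with terminal condition X(t + Δt) = x, and define the discrete departure point x_d = x − Δt · g( x − (Δt/2) g(x, t+Δt), t + Δt/2 ). Then there exists a constant C, depending only on the bounds on g and its derivatives (and not on x, t, or Δt), such that |X(t) − x_d| ≤ C Δt³ for all Δt ∈ (0,1]. -/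
/-!
Along a solution of `y' = F y` the second derivative `F' y (F y)` is Lipschitz in time, so
`y (τ - h) = y τ - h F (y τ) + (h² / 2) F' (y τ) (F (y τ)) + O(h³)`. Expanding `F` to first order
at `y τ` gives the same expansion, up to `O(h³)`, for the midpoint step
`y τ - h F (y τ - (h / 2) F (y τ))`. The non-autonomous equation `X' = g (X, s)` is the
autonomous one for `(X s, s)` with field `(g z, 1)`.
-/

open Set NNReal

section

variable {E G : Type*} [NormedAddCommGroup E] [NormedSpace ℝ E]
  [NormedAddCommGroup G] [NormedSpace ℝ G]

theorem norm_image_add_sub_sub_fderiv_le {F : E → G} {F' : E → E →L[ℝ] G} {K : ℝ≥0}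
    (hF : ∀ z, HasFDerivAt F (F' z) z) (hF' : LipschitzWith K F') (z v : E) :
    ‖F (z + v) - F z - F' z v‖ ≤ K * ‖v‖ ^ 2 := by
  have hz : z ∈ Metric.closedBall z ‖v‖ := Metric.mem_closedBall_self (norm_nonneg v)
  have hzv : z + v ∈ Metric.closedBall z ‖v‖ := by simp [Metric.mem_closedBall]
  have hbound : ∀ w ∈ Metric.closedBall z ‖v‖, ‖F' w - F' z‖ ≤ K * ‖v‖ := fun w hw =>
    (hF'.norm_sub_le w z).trans (by gcongr; rwa [← dist_eq_norm])
  simpa [sq, mul_assoc] using (convex_closedBall z ‖v‖).norm_image_sub_le_of_norm_hasFDerivWithin_le'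
    (fun w _ => (hF w).hasFDerivWithinAt) hbound hz hzv

theorem norm_taylor_two_remainder_le {Y Y' Y'' : ℝ → E} {a b D : ℝ} (hab : a ≤ b)
    (hY : ∀ s ∈ Icc a b, HasDerivWithinAt Y (Y' s) (Icc a b) s)
    (hY' : ∀ s ∈ Icc a b, HasDerivWithinAt Y' (Y'' s) (Icc a b) s)
    (hD : ∀ s ∈ Icc a b, ‖Y'' s - Y'' b‖ ≤ D) :
    ‖Y a - Y b - (a - b) • Y' b - ((a - b) ^ 2 / 2) • Y'' b‖ ≤ D * (b - a) ^ 2 := by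
  have hb : b ∈ Icc a b := right_mem_Icc.2 hab
  have hD0 : 0 ≤ D := by simpa using hD b hb
  have hdist : ∀ s ∈ Icc a b, ‖s - b‖ ≤ b - a := fun s hs => by
    rw [Real.norm_eq_abs, abs_sub_comm, abs_of_nonneg (by linarith [hs.2])]; linarith [hs.1]
  set R' : ℝ → E := fun s => Y' s - Y' b - (s - b) • Y'' b
  set R : ℝ → E := fun s => Y s - Y b - (s - b) • Y' b - ((s - b) ^ 2 / 2) • Y'' b
  have hR'_deriv : ∀ s ∈ Icc a b, HasDerivWithinAt R' (Y'' s - Y'' b) (Icc a b) s := fun s hs => by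
    simpa using ((hY' s hs).sub_const (Y' b)).fun_sub
      (((hasDerivWithinAt_id s _).sub_const b).smul_const (Y'' b))
  have hR_deriv : ∀ s ∈ Icc a b, HasDerivWithinAt R (R' s) (Icc a b) s := fun s hs =>
    ((((hY s hs).sub_const (Y b)).fun_sub
      (((hasDerivWithinAt_id s _).sub_const b).smul_const (Y' b))).fun_sub
      (((((hasDerivWithinAt_id s _).sub_const b).pow 2).div_const 2).smul_const (Y'' b))).congr_deriv
      (by simp only [R', id]; norm_num)
  have hR' : ∀ s ∈ Icc a b, ‖R' s‖ ≤ D * (b - a) := fun s hs => by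
    have := (convex_Icc a b).norm_image_sub_le_of_norm_hasDerivWithin_le hR'_deriv hD hb hs
    simp only [R', sub_self, zero_smul, sub_zero] at this
    exact this.trans (by gcongr; exact hdist s hs)
  have := (convex_Icc a b).norm_image_sub_le_of_norm_hasDerivWithin_le hR_deriv hR' hb
    (left_mem_Icc.2 hab)
  norm_num [R] at this
  calc _ ≤ D * (b - a) * ‖a - b‖ := this
    _ ≤ D * (b - a) * (b - a) := by gcongr; exact hdist a (left_mem_Icc.2 hab)
    _ = D * (b - a) ^ 2 := by ring

theorem LipschitzWith.prod_zero {F : E → E →L[ℝ] G} {K : ℝ≥0} (hF : LipschitzWith K F) :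
    LipschitzWith K fun z => (F z).prod (0 : E →L[ℝ] ℝ) := by
  refine LipschitzWith.of_dist_le_mul fun a b => ?_
  have : (F a).prod (0 : E →L[ℝ] ℝ) - (F b).prod 0 = (F a - F b).prod 0 := by ext <;> simp
  simpa [dist_eq_norm, this, ContinuousLinearMap.opNorm_prod] using hF.dist_le_mul a b

noncomputable def backwardMidpointStep (F : E → E) (h : ℝ) (y : E) : E :=
  y - h • F (y - (h / 2) • F y)

theorem backwardMidpointStep_timeAugmented (g : E × ℝ → E) (x : E) (τ h : ℝ) :
    backwardMidpointStep (fun z => (g z, (1 : ℝ))) h (x, τ)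
      = (x - h • g (x - (h / 2) • g (x, τ), τ - h / 2), τ - h) := by
  simp [backwardMidpointStep, sub_eq_add_neg]

theorem norm_sub_backwardMidpointStep_le {F : E → E} {F' : E → E →L[ℝ] E} {Y : ℝ → E}
    {M L : ℝ} {K : ℝ≥0} (hF : ∀ z, HasFDerivAt F (F' z) z) (hFM : ∀ z, ‖F z‖ ≤ M)
    (hF'L : ∀ z, ‖F' z‖ ≤ L) (hF'K : LipschitzWith K F') (hY : ∀ s, HasDerivAt Y (F (Y s)) s)
    (τ : ℝ) {h : ℝ} (hh : 0 ≤ h) :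
    ‖Y (τ - h) - backwardMidpointStep F h (Y τ)‖ ≤ (2 * K * M + L ^ 2) * M * h ^ 3 := by
  have hM : 0 ≤ M := (norm_nonneg _).trans (hFM 0)
  have hL : 0 ≤ L := (norm_nonneg _).trans (hF'L 0)
  set W : ℝ → E := fun s => F' (Y s) (F (Y s))
  have hFY : ∀ s, HasDerivAt (fun s => F (Y s)) (W s) s := fun s =>
    (hF (Y s)).comp_hasDerivAt s (hY s)
  have hF_lip : ∀ a b, ‖F a - F b‖ ≤ L * ‖a - b‖ := fun a b =>
    convex_univ.norm_image_sub_le_of_norm_hasFDerivWithin_le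
      (fun z _ => (hF z).hasFDerivWithinAt) (fun z _ => hF'L z) trivial trivial
  have hY_near : ∀ s ∈ Icc (τ - h) τ, ‖Y s - Y τ‖ ≤ M * h := fun s hs => by
    refine (convex_univ.norm_image_sub_le_of_norm_hasDerivWithin_le
      (fun u _ => (hY u).hasDerivWithinAt) (fun u _ => hFM (Y u)) trivial trivial).trans ?_
    rw [Real.norm_eq_abs, abs_sub_comm, abs_of_nonneg (by linarith [hs.2])]
    gcongr
    linarith [hs.1]
  have hW : ∀ s ∈ Icc (τ - h) τ, ‖W s - W τ‖ ≤ (K * M + L ^ 2) * M * h := fun s hs => by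
    have hYs := hY_near s hs
    calc ‖W s - W τ‖
        = ‖(F' (Y s) - F' (Y τ)) (F (Y s)) + F' (Y τ) (F (Y s) - F (Y τ))‖ := by
          simp only [W, sub_apply, map_sub]; abel_nf
      _ ≤ ‖F' (Y s) - F' (Y τ)‖ * ‖F (Y s)‖ + ‖F' (Y τ)‖ * ‖F (Y s) - F (Y τ)‖ :=
          norm_add_le_of_le (ContinuousLinearMap.le_opNorm _ _) (ContinuousLinearMap.le_opNorm _ _)
      _ ≤ K * (M * h) * M + L * (L * (M * h)) := by
          gcongr
          · exact (hF'K.norm_sub_le _ _).trans (by gcongr)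
          · exact hFM _
          · exact hF'L _
          · exact (hF_lip _ _).trans (by gcongr)
      _ = (K * M + L ^ 2) * M * h := by ring
  have hremainder := norm_taylor_two_remainder_le (sub_le_self τ hh)
    (fun s _ => (hY s).hasDerivWithinAt) (fun s _ => (hFY s).hasDerivWithinAt) hW
  set v : E := -(h / 2) • F (Y τ)
  have hv : ‖v‖ ≤ M * h := by
    rw [norm_smul, norm_neg, Real.norm_of_nonneg (by positivity)]
    nlinarith [hFM (Y τ), norm_nonneg (F (Y τ))]
  have hmidpoint := norm_image_add_sub_sub_fderiv_le hF hF'K (Y τ) v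
  have hsplit : Y (τ - h) - backwardMidpointStep F h (Y τ)
      = (Y (τ - h) - Y τ - (τ - h - τ) • F (Y τ) - ((τ - h - τ) ^ 2 / 2) • W τ)
        + h • (F (Y τ + v) - F (Y τ) - F' (Y τ) v) := by
    simp only [backwardMidpointStep, v, W, map_smul, ← neg_smul, sub_eq_add_neg (Y τ)]
    module
  calc _ ≤ (K * M + L ^ 2) * M * h * (τ - (τ - h)) ^ 2 + h * (K * ‖v‖ ^ 2) := by
        rw [hsplit]
        refine norm_add_le_of_le hremainder ?_
        rw [norm_smul, Real.norm_of_nonneg hh]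
        gcongr
    _ ≤ (K * M + L ^ 2) * M * h * h ^ 2 + h * (K * (M * h) ^ 2) := by
        rw [sub_sub_cancel]
        gcongr
    _ = (2 * K * M + L ^ 2) * M * h ^ 3 := by ring

theorem norm_sub_midpoint_departure_point_le {g : E × ℝ → E} {g' : E × ℝ → E × ℝ →L[ℝ] E}
    {X : ℝ → E} {M L : ℝ} {K : ℝ≥0} (hg : ∀ z, HasFDerivAt g (g' z) z) (hgM : ∀ z, ‖g z‖ ≤ M)
    (hg'L : ∀ z, ‖g' z‖ ≤ L) (hg'K : LipschitzWith K g') (hX : ∀ s, HasDerivAt X (g (X s, s)) s)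
    (t : ℝ) {h : ℝ} (hh : 0 ≤ h) :
    ‖X t - (X (t + h) - h • g (X (t + h) - (h / 2) • g (X (t + h), t + h), t + h / 2))‖
      ≤ (2 * K * max M 1 + L ^ 2) * max M 1 * h ^ 3 := by
  have := norm_sub_backwardMidpointStep_le (F := fun z => (g z, (1 : ℝ))) (M := max M 1)
    (fun z => (hg z).prodMk (hasFDerivAt_const 1 z))
    (fun z => (Prod.norm_def _).trans_le (max_le_max (hgM z) norm_one.le))
    (fun z => by simpa [ContinuousLinearMap.opNorm_prod] using hg'L z) hg'K.prod_zero
    (fun s => (hX s).prodMk (hasDerivAt_id s)) (t + h) hh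
  rw [add_sub_cancel_right, backwardMidpointStep_timeAugmented] at this
  refine le_trans (le_of_eq_of_le ?_ (norm_fst_le _)) this
  simp only [Prod.fst_sub, add_sub_assoc, sub_half]

end

/-- Third-order local truncation error of the midpoint (RK2) backward characteristic
tracing: if `g : ℝ² × ℝ → ℝ²` is `C²` with `g` and all its derivatives up to order 2
bounded, then there is a constant `C` (independent of `x`, `t`, `Δt`) such that for
every solution `X` of `X'(s) = g(X(s), s)` with terminal condition `X(t + Δt) = x` and
every `Δt ∈ (0, 1]`, the discrete departure point
`x_d = x - Δt · g(x - (Δt/2) g(x, t+Δt), t + Δt/2)` satisfies `‖X t - x_d‖ ≤ C Δt³`. -/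
theorem rk2_backward_tracing_third_order
    (g : (ℝ × ℝ) × ℝ → ℝ × ℝ) (hg : ContDiff ℝ 2 g)
    (B : ℝ) (hB : ∀ k : ℕ, k ≤ 2 → ∀ z, ‖iteratedFDeriv ℝ k g z‖ ≤ B) :
    ∃ C : ℝ, ∀ (x : ℝ × ℝ) (t Δt : ℝ), Δt ∈ Set.Ioc (0 : ℝ) 1 →
      ∀ X : ℝ → ℝ × ℝ,
        (∀ s : ℝ, HasDerivAt X (g (X s, s)) s) →
        X (t + Δt) = x →
        ‖X t - (x - Δt • g (x - (Δt / 2) • g (x, t + Δt), t + Δt / 2))‖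
          ≤ C * Δt^3 := by
  have hB0 : 0 ≤ B := (norm_nonneg _).trans (hB 0 (by norm_num) 0)
  have hDg_lip : LipschitzWith ⟨B, hB0⟩ (fderiv ℝ g) := by
    refine lipschitzWith_of_nnnorm_fderiv_le
      ((hg.fderiv_right (m := 1) le_rfl).differentiable one_ne_zero) fun z => ?_
    have := hB 2 le_rfl z
    rwa [← norm_iteratedFDeriv_fderiv, norm_iteratedFDeriv_one] at this
  refine ⟨(2 * B * max B 1 + B ^ 2) * max B 1, fun x t Δt hΔt X hX hXx => ?_⟩
  have := norm_sub_midpoint_departure_point_le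
    (fun z => (hg.differentiable two_ne_zero z).hasFDerivAt)
    (fun z => by simpa using hB 0 (by norm_num) z) (fun z => by simpa using hB 1 (by norm_num) z)
    hDg_lip hX t hΔt.1.le
  rwa [hXx] at this
end
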